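/- Let A₀ be a self-adjoint operator on a Hilbert space that is a countable orthogonal direct sum A₀ = ⊕_{n∈ℕ₀} (H + n), where H is a fixed self-adjoint operator with purely absolutely continuous spectrum [1/2, ∞) of constant multiplicity 2. Then σ(A₀) = [1/2, ∞), the spectrum of A₀ is purely absolutely continuous, and its multiplicity function equals 2n a.e. on the interval (n − 1/2, n + 1/2) for each n ∈ ℕ. -/

import Mathlib

/-!
Write `ρ = rhoModel` and `ν = nuModel` for the spectral models of `H` and `A₀`. The sheet
`ℝ × {(n, j)}` of `ν` is the sheet `ℝ × {j}` of `ρ` translated by `n`, so sending `F` to the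
function whose `n`-th sheet is `W (F n)` is a unitary `ℓ²(ℕ, H₀) → L²(ν)` that turns
`A₀ = ⊕ₙ (H + n)` into multiplication by the spectral variable `x`. Since `ν` lives on
`[1/2, ∞)`, for `Λ` off that half-line multiplication by `(x - Λ)⁻¹` is a bounded resolvent;
for `Λ ∈ [1/2, ∞)` the indicators of `[Λ, Λ + ε]` on the sheet `(0, 0)` are approximate
eigenvectors, so no bounded resolvent exists. The multiplicity at `E` counts the sheets
`(n, j)` whose support `[n + 1/2, ∞)` contains `E`.
-/

open MeasureTheory

/-- The spectral model measure for an operator with purely a.c. spectrum `[1/2, ∞)`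
of constant multiplicity `2`: two copies of Lebesgue measure on `[1/2, ∞)`. -/
noncomputable def rhoModel : Measure (ℝ × Fin 2) :=
  Measure.sum fun j : Fin 2 =>
    (volume.restrict (Set.Ici (1 / 2 : ℝ))).map fun x => (x, j)

/-- The spectral model measure for `⊕ₙ (H + n)`: for each `(n, j) ∈ ℕ × Fin 2`
a copy of Lebesgue measure on `[n + 1/2, ∞)`. -/
noncomputable def nuModel : Measure (ℝ × (ℕ × Fin 2)) :=
  Measure.sum fun p : ℕ × Fin 2 =>
    (volume.restrict (Set.Ici ((p.1 : ℝ) + 1 / 2))).map fun x => (x, p)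

open scoped ENNReal NNReal
open Set Filter

section SumMap

variable {ι Y X : Type*} [MeasurableSpace Y] [MeasurableSpace X] {μ : Measure Y}
  {e : ι → Y → X}

theorem ae_sum_map_iff [Countable ι] (he : ∀ i, MeasurableEmbedding (e i)) {P : X → Prop} :
    (∀ᵐ x ∂Measure.sum fun i => μ.map (e i), P x) ↔ ∀ i, ∀ᵐ y ∂μ, P (e i y) := by
  simp only [Measure.ae_sum_iff, (he _).ae_map_iff]

theorem lintegral_sum_map (he : ∀ i, MeasurableEmbedding (e i)) (f : X → ℝ≥0∞) :
    ∫⁻ x, f x ∂Measure.sum (fun i => μ.map (e i)) = ∑' i, ∫⁻ y, f (e i y) ∂μ := by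
  simp only [lintegral_sum_measure, (he _).lintegral_map]

theorem aestronglyMeasurable_sum_map_iff [Countable ι] (he : ∀ i, MeasurableEmbedding (e i))
    {β : Type*} [TopologicalSpace β] [TopologicalSpace.PseudoMetrizableSpace β] {f : X → β} :
    AEStronglyMeasurable f (Measure.sum fun i => μ.map (e i)) ↔
      ∀ i, AEStronglyMeasurable (f ∘ e i) μ := by
  simp only [aestronglyMeasurable_sum_measure_iff, (he _).aestronglyMeasurable_map_iff]

end SumMap

section L2

variable {X E : Type*} [MeasurableSpace X] {μ : Measure X} [NormedAddCommGroup E]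

theorem eLpNorm_two_sq (f : X → E) : eLpNorm f 2 μ ^ 2 = ∫⁻ x, ‖f x‖ₑ ^ 2 ∂μ := by
  simpa using eLpNorm_nnreal_pow_eq_lintegral (f := f) (μ := μ) (p := 2) two_ne_zero

theorem memLp_two_of_lintegral_ne_top {f : X → E} (hf : AEStronglyMeasurable f μ)
    (h : ∫⁻ x, ‖f x‖ₑ ^ 2 ∂μ ≠ ∞) : MemLp f 2 μ :=
  ⟨hf, by rw [← eLpNorm_two_sq] at h; exact lt_top_iff_ne_top.2 (by simpa using h)⟩

theorem Lp.enorm_sq_eq_lintegral (f : Lp E 2 μ) : ‖f‖ₑ ^ 2 = ∫⁻ x, ‖f x‖ₑ ^ 2 ∂μ := by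
  rw [Lp.enorm_def, eLpNorm_two_sq]

theorem lp.enorm_sq_eq_tsum {ι : Type*} (F : lp (fun _ : ι => E) 2) :
    ‖F‖ₑ ^ 2 = ∑' i, ‖F i‖ₑ ^ 2 := by
  have h := lp.hasSum_norm (p := 2) (by norm_num) F
  simp only [ENNReal.toReal_ofNat, Real.rpow_two] at h
  simp only [← ofReal_norm, ← ENNReal.ofReal_pow (norm_nonneg _)]
  rw [← ENNReal.ofReal_tsum_of_nonneg (fun _ => by positivity) h.summable, h.tsum_eq]

theorem memℓp_two_of_tsum_ne_top {ι : Type*} {F : ι → E} (h : ∑' i, ‖F i‖ₑ ^ 2 ≠ ∞) :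
    Memℓp F 2 := by
  refine memℓp_gen ?_
  simp only [enorm_eq_nnnorm, ← ENNReal.coe_pow, ENNReal.tsum_coe_ne_top_iff_summable] at h
  simpa [← NNReal.summable_coe] using h

theorem norm_eq_norm_of_enorm_sq_eq {E F : Type*} [SeminormedAddGroup E] [SeminormedAddGroup F]
    {x : E} {y : F} (h : ‖x‖ₑ ^ 2 = ‖y‖ₑ ^ 2) : ‖x‖ = ‖y‖ := by
  have h' := congrArg ENNReal.toReal h
  simp only [ENNReal.toReal_pow, toReal_enorm] at h'
  exact (pow_left_inj₀ (norm_nonneg _) (norm_nonneg _) two_ne_zero).1 h'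

end L2

section Resolvent

variable {𝕜 E F : Type*} [NontriviallyNormedField 𝕜] [NormedAddCommGroup E] [NormedSpace 𝕜 E]
  [NormedAddCommGroup F] [NormedSpace 𝕜 F] {A : E → E → Prop} {B : F → F → Prop} {Λ : 𝕜}

/-- An operator is encoded by its graph, `A f u` meaning `f ∈ dom A ∧ A f = u`;
`S` is then the bounded inverse of `A - Λ`. -/
def IsResolvent (A : E → E → Prop) (Λ : 𝕜) (S : E →L[𝕜] E) : Prop :=
  (∀ G, A (S G) (Λ • S G + G)) ∧ ∀ F U, A F U → S (U - Λ • F) = F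

theorem IsResolvent.conj (V : E ≃ₗᵢ[𝕜] F) (hAB : ∀ f u, A f u ↔ B (V f) (V u))
    {S : F →L[𝕜] F} (hS : IsResolvent B Λ S) :
    IsResolvent A Λ ((V.symm : F →L[𝕜] E) ∘L S ∘L (V : E →L[𝕜] F)) := by
  refine ⟨fun G => ?_, fun f u hfu => ?_⟩
  · simpa [hAB] using hS.1 (V G)
  · have := hS.2 _ _ ((hAB f u).1 hfu)
    simp [this]

theorem exists_isResolvent_congr (V : E ≃ₗᵢ[𝕜] F) (hAB : ∀ f u, A f u ↔ B (V f) (V u)) :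
    (∃ S, IsResolvent A Λ S) ↔ ∃ S, IsResolvent B Λ S := by
  have hBA (f u : F) : B f u ↔ A (V.symm f) (V.symm u) := by simp [hAB]
  exact ⟨fun ⟨S, hS⟩ => ⟨_, hS.conj V.symm hBA⟩, fun ⟨S, hS⟩ => ⟨_, hS.conj V hAB⟩⟩

theorem IsResolvent.norm_le {S : E →L[𝕜] E} (hS : IsResolvent A Λ S) {f u : E} (hfu : A f u) :
    ‖f‖ ≤ ‖S‖ * ‖u - Λ • f‖ := by
  simpa [hS.2 f u hfu] using S.le_opNorm (u - Λ • f)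

theorem not_isResolvent_of_approx_eigenvectors
    (h : ∀ ε > 0, ∃ f u, A f u ∧ f ≠ 0 ∧ ‖u - Λ • f‖ ≤ ε * ‖f‖) (S : E →L[𝕜] E) :
    ¬IsResolvent A Λ S := by
  intro hS
  obtain ⟨f, u, hfu, hf, hle⟩ := h (‖S‖ + 1)⁻¹ (by positivity)
  have hf' : 0 < ‖f‖ := norm_pos_iff.2 hf
  have hS1 : ‖S‖ / (‖S‖ + 1) < 1 := (div_lt_one (by positivity)).2 (lt_add_one _)
  refine lt_irrefl ‖f‖ ?_
  calc ‖f‖ ≤ ‖S‖ * ‖u - Λ • f‖ := hS.norm_le hfu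
    _ ≤ ‖S‖ * ((‖S‖ + 1)⁻¹ * ‖f‖) := by gcongr
    _ = ‖S‖ / (‖S‖ + 1) * ‖f‖ := by ring
    _ < 1 * ‖f‖ := by gcongr
    _ = ‖f‖ := one_mul _

end Resolvent

section Multiplication

variable {X : Type*} [MeasurableSpace X] {μ : Measure X} {a : X → ℂ} {Λ : ℂ}

def MulRel (μ : Measure X) (a : X → ℂ) (f u : Lp ℂ 2 μ) : Prop :=
  u =ᵐ[μ] fun x => a x * f x

theorem mulRel_add_const_iff (c : ℂ) {f u : Lp ℂ 2 μ} :
    MulRel μ (fun x => a x + c) f u ↔ MulRel μ a f (u - c • f) := by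
  have hsub : ⇑(u - c • f) =ᵐ[μ] fun x => u x - c * f x := by
    filter_upwards [Lp.coeFn_sub u (c • f), Lp.coeFn_smul c f] with x h1 h2
    rw [h1, Pi.sub_apply, h2, Pi.smul_apply, smul_eq_mul]
  simp only [MulRel, EventuallyEq]
  refine eventually_congr (hsub.mono fun x hx => ?_)
  rw [hx]
  constructor <;> intro h <;> linear_combination h

theorem exists_isResolvent_mulRel (ha : AEMeasurable a μ) {δ : ℝ} (hδ : 0 < δ)
    (h : ∀ᵐ x ∂μ, δ ≤ ‖a x - Λ‖) : ∃ S, IsResolvent (MulRel μ a) Λ S := by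
  have hm : MemLp (fun x => (a x - Λ)⁻¹) ∞ μ :=
    memLp_top_of_bound (ha.sub_const Λ).inv.aestronglyMeasurable δ⁻¹
      (h.mono fun x hx => by rw [norm_inv]; exact inv_anti₀ hδ hx)
  -- Hölder's pairing `L∞ × L² → L²` makes multiplication by `(a - Λ)⁻¹` a bounded operator.
  set S := (ContinuousLinearMap.mul ℂ ℂ).holderL μ ∞ 2 2 hm.toLp
  have hS (g : Lp ℂ 2 μ) : S g =ᵐ[μ] fun x => (a x - Λ)⁻¹ * g x := by
    filter_upwards [ContinuousLinearMap.coeFn_holder (ContinuousLinearMap.mul ℂ ℂ) (r := 2)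
      hm.toLp g, hm.coeFn_toLp] with x h1 h2
    rw [ContinuousLinearMap.holderL_apply_apply, h1, h2]
    rfl
  have hinv : ∀ᵐ x ∂μ, (a x - Λ) * (a x - Λ)⁻¹ = 1 :=
    h.mono fun x hx => mul_inv_cancel₀ (norm_pos_iff.1 (hδ.trans_le hx))
  refine ⟨S, fun G => ?_, fun F U hFU => Lp.ext ?_⟩
  · filter_upwards [Lp.coeFn_add (Λ • S G) G, Lp.coeFn_smul Λ (S G), hS G, hinv]
      with x h1 h2 h3 h4
    rw [h1, Pi.add_apply, h2, Pi.smul_apply, smul_eq_mul, h3]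
    linear_combination (-G x) * h4
  · filter_upwards [hS (U - Λ • F), Lp.coeFn_sub U (Λ • F), Lp.coeFn_smul Λ F, hFU, hinv]
      with x h1 h2 h3 h4 h5
    rw [h1, h2, Pi.sub_apply, h3, Pi.smul_apply, smul_eq_mul, h4]
    linear_combination F x * h5

theorem not_isResolvent_mulRel (ha : AEMeasurable a μ)
    (h : ∀ ε > 0, ∃ s, MeasurableSet s ∧ μ s ≠ 0 ∧ μ s ≠ ∞ ∧ ∀ x ∈ s, ‖a x - Λ‖ ≤ ε)
    (S : Lp ℂ 2 μ →L[ℂ] Lp ℂ 2 μ) : ¬IsResolvent (MulRel μ a) Λ S := by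
  refine not_isResolvent_of_approx_eigenvectors (fun ε hε => ?_) S
  obtain ⟨s, hs, hμs0, hμs, has⟩ := h ε hε
  set f := indicatorConstLp 2 hs hμs (1 : ℂ)
  have hbound : ∀ᵐ x ∂μ, ‖(a x - Λ) * f x‖ ≤ ε * ‖f x‖ := by
    filter_upwards [indicatorConstLp_coeFn_notMem (p := 2) (hs := hs) (hμs := hμs)
      (c := (1 : ℂ))] with x hx
    rw [norm_mul]
    by_cases hxs : x ∈ s
    · exact mul_le_mul_of_nonneg_right (has x hxs) (norm_nonneg _)
    · simp [f, hx hxs]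
  have hg : MemLp (fun x => (a x - Λ) * f x) 2 μ :=
    MemLp.of_le_mul (Lp.memLp f)
      ((ha.sub_const Λ).aestronglyMeasurable.mul (Lp.aestronglyMeasurable f)) hbound
  refine ⟨f, Λ • f + hg.toLp, ?_, ?_, ?_⟩
  · filter_upwards [Lp.coeFn_add (Λ • f) hg.toLp, Lp.coeFn_smul Λ f, hg.coeFn_toLp]
      with x h1 h2 h3
    rw [h1, Pi.add_apply, h2, Pi.smul_apply, smul_eq_mul, h3]
    ring
  · rw [← norm_pos_iff, norm_indicatorConstLp two_ne_zero ENNReal.ofNat_ne_top, norm_one, one_mul]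
    exact Real.rpow_pos_of_pos (ENNReal.toReal_pos hμs0 hμs) _
  · rw [add_sub_cancel_left]
    refine Lp.norm_le_mul_norm_of_ae_le_mul ?_
    filter_upwards [hg.coeFn_toLp, hbound] with x h1 h2
    rwa [h1]

end Multiplication

theorem exists_pos_le_norm_ofReal_sub {c : ℝ} {Λ : ℂ} (h : ¬(Λ.im = 0 ∧ c ≤ Λ.re)) :
    ∃ δ > 0, ∀ x : ℝ, c ≤ x → δ ≤ ‖(x : ℂ) - Λ‖ := by
  refine ⟨max |Λ.im| (c - Λ.re), ?_, fun x hx => max_le ?_ ?_⟩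
  · by_contra! hle
    exact h ⟨abs_nonpos_iff.1 ((le_max_left _ _).trans hle),
      by linarith [(le_max_right _ _).trans hle]⟩
  · simpa using Complex.abs_im_le_norm ((x : ℂ) - Λ)
  · have := Complex.re_le_norm ((x : ℂ) - Λ)
    simp only [Complex.sub_re, Complex.ofReal_re] at this
    linarith

theorem map_add_const_volume_restrict_Ici (a c : ℝ) :
    (volume.restrict (Ici a)).map (· + c) = volume.restrict (Ici (a + c)) := by
  have hpre : (· + c) ⁻¹' Ici (a + c) = Ici a := by ext; simp
  rw [← hpre, ← Measure.restrict_map (measurable_add_const c) measurableSet_Ici,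
    map_add_right_eq_self]

def shiftSheet (n : ℕ) (q : ℝ × Fin 2) : ℝ × (ℕ × Fin 2) := (q.1 + n, (n, q.2))

theorem measurableEmbedding_shiftSheet (n : ℕ) : MeasurableEmbedding (shiftSheet n) :=
  (MeasurableEquiv.addRight (n : ℝ)).measurableEmbedding.prodMap
    (measurableEmbedding_prodMk_left n)

theorem nuModel_eq_sum_map_shiftSheet :
    nuModel = Measure.sum fun n : ℕ => rhoModel.map (shiftSheet n) := by
  have hsheet (n : ℕ) (j : Fin 2) :
      ((volume.restrict (Ici (1 / 2 : ℝ))).map fun x => (x, j)).map (shiftSheet n) =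
        (volume.restrict (Ici ((n : ℝ) + 1 / 2))).map fun x => (x, (n, j)) := by
    rw [Measure.map_map (measurableEmbedding_shiftSheet n).measurable measurable_prodMk_right,
      add_comm, ← map_add_const_volume_restrict_Ici,
      Measure.map_map measurable_prodMk_right (measurable_add_const _)]
    rfl
  simp only [rhoModel, Measure.map_sum (measurableEmbedding_shiftSheet _).measurable.aemeasurable,
    hsheet, Measure.sum_sum, nuModel]

theorem ae_nuModel_iff {P : ℝ × (ℕ × Fin 2) → Prop} :
    (∀ᵐ q ∂nuModel, P q) ↔ ∀ n, ∀ᵐ q ∂rhoModel, P (shiftSheet n q) := by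
  rw [nuModel_eq_sum_map_shiftSheet, ae_sum_map_iff measurableEmbedding_shiftSheet]

theorem lintegral_nuModel (f : ℝ × (ℕ × Fin 2) → ℝ≥0∞) :
    ∫⁻ q, f q ∂nuModel = ∑' n, ∫⁻ q, f (shiftSheet n q) ∂rhoModel := by
  rw [nuModel_eq_sum_map_shiftSheet, lintegral_sum_map measurableEmbedding_shiftSheet]

theorem map_shiftSheet_le_nuModel (n : ℕ) : rhoModel.map (shiftSheet n) ≤ nuModel := by
  rw [nuModel_eq_sum_map_shiftSheet]
  exact Measure.le_sum _ n

theorem quasiMeasurePreserving_shiftSheet (n : ℕ) :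
    Measure.QuasiMeasurePreserving (shiftSheet n) rhoModel nuModel :=
  ⟨(measurableEmbedding_shiftSheet n).measurable,
    (map_shiftSheet_le_nuModel n).absolutelyContinuous⟩

theorem ae_half_le_rhoModel : ∀ᵐ q ∂rhoModel, (1 / 2 : ℝ) ≤ q.1 := by
  rw [rhoModel, ae_sum_map_iff (e := fun (j : Fin 2) (x : ℝ) => (x, j))
    fun j => MeasurableEmbedding.id.prodMk_right j]
  exact fun j => ae_restrict_mem measurableSet_Ici

theorem ae_half_le_nuModel : ∀ᵐ q ∂nuModel, (1 / 2 : ℝ) ≤ q.1 :=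
  ae_nuModel_iff.2 fun n => ae_half_le_rhoModel.mono fun q hq => by
    simp only [shiftSheet]
    linarith [(Nat.cast_nonneg n : (0 : ℝ) ≤ n)]

theorem nuModel_prod_singleton {B : Set ℝ} (hB : MeasurableSet B) (p : ℕ × Fin 2) :
    nuModel (B ×ˢ {p}) = volume (B ∩ Ici ((p.1 : ℝ) + 1 / 2)) := by
  have hBp : MeasurableSet (B ×ˢ {p}) := hB.prod (measurableSet_singleton p)
  rw [nuModel, Measure.sum_apply _ hBp, tsum_eq_single p]
  · rw [Measure.map_apply measurable_prodMk_right hBp, mk_preimage_prod_left (mem_singleton p),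
      Measure.restrict_apply hB]
  · intro i hi
    rw [Measure.map_apply measurable_prodMk_right hBp,
      mk_preimage_prod_left_eq_empty (mem_singleton_iff.not.2 hi), measure_empty]

theorem nuModel_Icc_prod_zero {a : ℝ} (ha : 1 / 2 ≤ a) (ε : ℝ) :
    nuModel (Icc a (a + ε) ×ˢ {(0, 0)}) = ENNReal.ofReal ε := by
  rw [nuModel_prod_singleton measurableSet_Icc, inter_eq_left.2, Real.volume_Icc,
    add_sub_cancel_left]
  intro x hx
  simp only [mem_Ici, CharP.cast_eq_zero, zero_add]
  exact ha.trans hx.1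

theorem memLp_comp_shiftSheet (φ : Lp ℂ 2 nuModel) (n : ℕ) :
    MemLp (φ ∘ shiftSheet n) 2 rhoModel :=
  ((Lp.memLp φ).mono_measure (map_shiftSheet_le_nuModel n)).comp_of_map
    (measurableEmbedding_shiftSheet n).measurable.aemeasurable

noncomputable def sheet (n : ℕ) : Lp ℂ 2 nuModel →ₗ[ℂ] Lp ℂ 2 rhoModel where
  toFun φ := (memLp_comp_shiftSheet φ n).toLp
  map_add' φ ψ := by
    have h : ⇑(φ + ψ) ∘ shiftSheet n =ᵐ[rhoModel] (⇑φ + ⇑ψ) ∘ shiftSheet n :=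
      (quasiMeasurePreserving_shiftSheet n).ae_eq_comp (Lp.coeFn_add φ ψ)
    rw [Pi.add_comp] at h
    rw [← MemLp.toLp_add]
    exact MemLp.toLp_congr _ _ h
  map_smul' c φ := by
    have h : ⇑(c • φ) ∘ shiftSheet n =ᵐ[rhoModel] (c • ⇑φ) ∘ shiftSheet n :=
      (quasiMeasurePreserving_shiftSheet n).ae_eq_comp (Lp.coeFn_smul c φ)
    rw [RingHom.id_apply, ← MemLp.toLp_const_smul]
    exact MemLp.toLp_congr _ _ h

theorem coeFn_sheet (n : ℕ) (φ : Lp ℂ 2 nuModel) : sheet n φ =ᵐ[rhoModel] φ ∘ shiftSheet n :=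
  MemLp.coeFn_toLp (memLp_comp_shiftSheet φ n)

theorem tsum_enorm_sq_sheet (φ : Lp ℂ 2 nuModel) : ∑' n, ‖sheet n φ‖ₑ ^ 2 = ‖φ‖ₑ ^ 2 := by
  simp only [Lp.enorm_sq_eq_lintegral, lintegral_nuModel]
  refine tsum_congr fun n => lintegral_congr_ae ?_
  filter_upwards [coeFn_sheet n φ] with q hq
  rw [hq]
  rfl

theorem mulRel_nuModel_iff (φ ψ : Lp ℂ 2 nuModel) :
    MulRel nuModel (fun q => (q.1 : ℂ)) φ ψ ↔
      ∀ n : ℕ, MulRel rhoModel (fun q => (q.1 : ℂ) + ((n : ℝ) : ℂ)) (sheet n φ) (sheet n ψ) := by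
  simp only [MulRel, EventuallyEq]
  rw [ae_nuModel_iff]
  refine forall_congr' fun n => eventually_congr ?_
  filter_upwards [coeFn_sheet n φ, coeFn_sheet n ψ] with q hφ hψ
  simp only [hφ, hψ, Function.comp_apply, shiftSheet]
  push_cast
  rfl

section Glue

variable {H0 : Type*} [NormedAddCommGroup H0] [NormedSpace ℂ H0]
  (W : H0 ≃ₗᵢ[ℂ] Lp ℂ 2 rhoModel)

theorem memℓp_sheets (φ : Lp ℂ 2 nuModel) : Memℓp (fun n => W.symm (sheet n φ)) 2 := by
  refine memℓp_two_of_tsum_ne_top ?_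
  simp only [LinearIsometryEquiv.enorm_map, tsum_enorm_sq_sheet]
  exact ENNReal.pow_ne_top enorm_ne_top

noncomputable def sheets : Lp ℂ 2 nuModel →ₗᵢ[ℂ] lp (fun _ : ℕ => H0) 2 where
  toFun φ := ⟨fun n => W.symm (sheet n φ), memℓp_sheets W φ⟩
  map_add' φ ψ := lp.ext <| funext fun n => by simp; rfl
  map_smul' c φ := lp.ext <| funext fun n => by simp
  norm_map' φ := norm_eq_norm_of_enorm_sq_eq <| by
    rw [lp.enorm_sq_eq_tsum, ← tsum_enorm_sq_sheet]
    simp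

theorem sheets_apply (φ : Lp ℂ 2 nuModel) (n : ℕ) : sheets W φ n = W.symm (sheet n φ) := rfl

noncomputable def glueFun (F : ℕ → H0) (q : ℝ × (ℕ × Fin 2)) : ℂ :=
  W (F q.2.1) (q.1 - q.2.1, q.2.2)

theorem glueFun_comp_shiftSheet (F : ℕ → H0) (n : ℕ) : glueFun W F ∘ shiftSheet n = W (F n) := by
  ext q
  simp [glueFun, shiftSheet]

theorem memLp_glueFun (F : lp (fun _ : ℕ => H0) 2) : MemLp (glueFun W F) 2 nuModel := by
  refine memLp_two_of_lintegral_ne_top ?_ ?_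
  · rw [nuModel_eq_sum_map_shiftSheet,
      aestronglyMeasurable_sum_map_iff measurableEmbedding_shiftSheet]
    intro n
    rw [glueFun_comp_shiftSheet]
    exact Lp.aestronglyMeasurable _
  · have hsheet (n : ℕ) : ∫⁻ q, ‖glueFun W F (shiftSheet n q)‖ₑ ^ 2 ∂rhoModel = ‖F n‖ₑ ^ 2 := by
      rw [← W.enorm_map, Lp.enorm_sq_eq_lintegral, ← glueFun_comp_shiftSheet]
      rfl
    rw [lintegral_nuModel]
    simp only [hsheet, ← lp.enorm_sq_eq_tsum]
    exact ENNReal.pow_ne_top enorm_ne_top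

theorem sheet_toLp_glueFun (F : lp (fun _ : ℕ => H0) 2) (n : ℕ) :
    sheet n (memLp_glueFun W F).toLp = W (F n) := by
  refine Lp.ext ((coeFn_sheet n _).trans ?_)
  rw [← glueFun_comp_shiftSheet]
  exact (quasiMeasurePreserving_shiftSheet n).ae_eq_comp (MemLp.coeFn_toLp _)

theorem sheets_surjective : Function.Surjective (sheets W) := fun F =>
  ⟨(memLp_glueFun W F).toLp, lp.ext <| funext fun n => by
    rw [sheets_apply, sheet_toLp_glueFun, W.symm_apply_apply]⟩

noncomputable def sheetsEquiv : Lp ℂ 2 nuModel ≃ₗᵢ[ℂ] lp (fun _ : ℕ => H0) 2 :=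
  LinearIsometryEquiv.ofSurjective (sheets W) (sheets_surjective W)

theorem sheet_sheetsEquiv_symm (F : lp (fun _ : ℕ => H0) 2) (n : ℕ) :
    sheet n ((sheetsEquiv W).symm F) = W (F n) := by
  rw [← W.symm_apply_eq, ← sheets_apply]
  exact congrFun (congrArg _ ((sheetsEquiv W).apply_symm_apply F)) n

theorem mulRel_sheetsEquiv_symm_iff (F U : lp (fun _ : ℕ => H0) 2) :
    MulRel nuModel (fun q => (q.1 : ℂ)) ((sheetsEquiv W).symm F) ((sheetsEquiv W).symm U) ↔
      ∀ n : ℕ, MulRel rhoModel (fun q => (q.1 : ℂ)) (W (F n)) (W (U n - ((n : ℝ) : ℂ) • F n)) := by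
  simp only [mulRel_nuModel_iff, sheet_sheetsEquiv_symm, mulRel_add_const_iff, map_sub, map_smul]

end Glue

theorem exists_isResolvent_mulRel_nuModel_iff (Λ : ℂ) :
    (∃ S, IsResolvent (MulRel nuModel fun q => (q.1 : ℂ)) Λ S) ↔ ¬(Λ.im = 0 ∧ 1 / 2 ≤ Λ.re) := by
  have ha : AEMeasurable (fun q : ℝ × (ℕ × Fin 2) => (q.1 : ℂ)) nuModel :=
    (Complex.measurable_ofReal.comp measurable_fst).aemeasurable
  constructor
  · rintro ⟨S, hS⟩ ⟨him, hre⟩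
    refine not_isResolvent_mulRel ha (fun ε hε => ?_) S hS
    refine ⟨Icc Λ.re (Λ.re + ε) ×ˢ {(0, 0)}, measurableSet_Icc.prod (measurableSet_singleton _),
      by simp [nuModel_Icc_prod_zero hre, hε], by simp [nuModel_Icc_prod_zero hre],
      fun q hq => ?_⟩
    have hΛ : Λ = (Λ.re : ℂ) := Complex.ext rfl (by simp [him])
    rw [hΛ, ← Complex.ofReal_sub, Complex.norm_real, Real.norm_eq_abs, abs_le]
    constructor <;> linarith [hq.1.1, hq.1.2]
  · intro h
    obtain ⟨δ, hδ, hb⟩ := exists_pos_le_norm_ofReal_sub h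
    exact exists_isResolvent_mulRel ha hδ (ae_half_le_nuModel.mono fun q hq => hb q.1 hq)

theorem card_sheets_below {n : ℕ} {E : ℝ} (hE : E ∈ Ioo ((n : ℝ) - 1 / 2) ((n : ℝ) + 1 / 2)) :
    Nat.card {p : ℕ × Fin 2 // (p.1 : ℝ) + 1 / 2 ≤ E} = 2 * n := by
  have hiff (p : ℕ × Fin 2) : (p.1 : ℝ) + 1 / 2 ≤ E ↔ p.1 < n := by
    constructor
    · intro h
      by_contra! hle
      have : (n : ℝ) ≤ p.1 := by exact_mod_cast hle
      linarith [hE.2]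
    · intro h
      have : (p.1 : ℝ) + 1 ≤ n := by exact_mod_cast h
      linarith [hE.1]
  have e : {p : ℕ × Fin 2 // p.1 < n} ≃ {k : ℕ // k < n} × Fin 2 :=
    Equiv.prodSubtypeFstEquivSubtypeProd (p := fun k : ℕ => k < n)
  rw [Nat.card_congr ((Equiv.subtypeEquivRight hiff).trans e), Nat.card_prod,
    ← Nat.card_congr Fin.equivSubtype]
  simp [mul_comm]

theorem directSum_spectrum_ac_general {H0 : Type*} [NormedAddCommGroup H0]
    [InnerProductSpace ℂ H0]
    (Hrel : H0 → H0 → Prop)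
    (W : H0 ≃ₗᵢ[ℂ] Lp ℂ 2 rhoModel)
    -- `H` is (unitarily) multiplication by the spectral variable on `L²(ρ)`
    (hW : ∀ f u : H0, Hrel f u ↔
      (W u : ℝ × Fin 2 → ℂ) =ᵐ[rhoModel] fun p => (p.1 : ℂ) * (W f) p)
    (A0rel : lp (fun _ : ℕ => H0) 2 → lp (fun _ : ℕ => H0) 2 → Prop)
    -- `A₀` is the orthogonal direct sum `⊕ₙ (H + n)`
    (hA0 : ∀ F U : lp (fun _ : ℕ => H0) 2,
      A0rel F U ↔ ∀ n : ℕ, Hrel (F n) (U n - ((n : ℝ) : ℂ) • F n)) :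
    -- σ(A₀) = [1/2, ∞)
    (∀ Λ : ℂ, (¬(Λ.im = 0 ∧ 1 / 2 ≤ Λ.re)) ↔
      ∃ S : lp (fun _ : ℕ => H0) 2 →L[ℂ] lp (fun _ : ℕ => H0) 2,
        (∀ G, A0rel (S G) (Λ • S G + G)) ∧
        (∀ F U, A0rel F U → S (U - Λ • F) = F)) ∧
    -- purely absolutely continuous: unitary equivalence with the a.c. model `L²(ν)`
    (∃ V : lp (fun _ : ℕ => H0) 2 ≃ₗᵢ[ℂ] Lp ℂ 2 nuModel,
      ∀ F U, A0rel F U ↔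
        (V U : ℝ × (ℕ × Fin 2) → ℂ) =ᵐ[nuModel] fun p => (p.1 : ℂ) * (V F) p) ∧
    -- multiplicity function: `2n` a.e. on `(n − 1/2, n + 1/2)`
    (∀ n : ℕ, 1 ≤ n → ∀ E ∈ Set.Ioo ((n : ℝ) - 1 / 2) ((n : ℝ) + 1 / 2),
      Nat.card {p : ℕ × Fin 2 // (p.1 : ℝ) + 1 / 2 ≤ E} = 2 * n) := by
  set V := (sheetsEquiv W).symm
  have hV (F U : lp (fun _ : ℕ => H0) 2) :
      A0rel F U ↔ MulRel nuModel (fun q => (q.1 : ℂ)) (V F) (V U) := by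
    rw [hA0, mulRel_sheetsEquiv_symm_iff]
    exact forall_congr' fun n => hW _ _
  refine ⟨fun Λ => ?_, ⟨V, hV⟩, fun n _ E hE => card_sheets_below hE⟩
  exact ((exists_isResolvent_congr V hV).trans (exists_isResolvent_mulRel_nuModel_iff Λ)).symm

/-- Spectrum of the direct sum `A₀ = ⊕ₙ (H + n)`, where `H` has purely absolutely
continuous spectrum `[1/2, ∞)` of constant multiplicity `2` (expressed by a unitary
`W` onto the multiplication operator model `L²(ρ)`): `σ(A₀) = [1/2, ∞)` (statement
on bounded invertibility of `A₀ − Λ`), the spectrum of `A₀` is purely absolutely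
continuous (`A₀` is unitarily equivalent to multiplication by the spectral variable
on the absolutely continuous model `L²(ν)`), and the multiplicity function equals
`2n` on `(n − 1/2, n + 1/2)` (the number of spectral sheets of `ν` over such `E`). -/
theorem directSum_spectrum_ac {H0 : Type*} [NormedAddCommGroup H0]
    [InnerProductSpace ℂ H0] [CompleteSpace H0]
    (Hrel : H0 → H0 → Prop)
    (W : H0 ≃ₗᵢ[ℂ] Lp ℂ 2 rhoModel)
    -- `H` is (unitarily) multiplication by the spectral variable on `L²(ρ)`
    (hW : ∀ f u : H0, Hrel f u ↔
      (W u : ℝ × Fin 2 → ℂ) =ᵐ[rhoModel] fun p => (p.1 : ℂ) * (W f) p)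
    (A0rel : lp (fun _ : ℕ => H0) 2 → lp (fun _ : ℕ => H0) 2 → Prop)
    -- `A₀` is the orthogonal direct sum `⊕ₙ (H + n)`
    (hA0 : ∀ F U : lp (fun _ : ℕ => H0) 2,
      A0rel F U ↔ ∀ n : ℕ, Hrel (F n) (U n - ((n : ℝ) : ℂ) • F n)) :
    -- σ(A₀) = [1/2, ∞)
    (∀ Λ : ℂ, (¬(Λ.im = 0 ∧ 1 / 2 ≤ Λ.re)) ↔
      ∃ S : lp (fun _ : ℕ => H0) 2 →L[ℂ] lp (fun _ : ℕ => H0) 2,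
        (∀ G, A0rel (S G) (Λ • S G + G)) ∧
        (∀ F U, A0rel F U → S (U - Λ • F) = F)) ∧
    -- purely absolutely continuous: unitary equivalence with the a.c. model `L²(ν)`
    (∃ V : lp (fun _ : ℕ => H0) 2 ≃ₗᵢ[ℂ] Lp ℂ 2 nuModel,
      ∀ F U, A0rel F U ↔
        (V U : ℝ × (ℕ × Fin 2) → ℂ) =ᵐ[nuModel] fun p => (p.1 : ℂ) * (V F) p) ∧
    -- multiplicity function: `2n` a.e. on `(n − 1/2, n + 1/2)`
    (∀ n : ℕ, 1 ≤ n → ∀ E ∈ Set.Ioo ((n : ℝ) - 1 / 2) ((n : ℝ) + 1 / 2),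
      Nat.card {p : ℕ × Fin 2 // (p.1 : ℝ) + 1 / 2 ≤ E} = 2 * n) :=
  directSum_spectrum_ac_general Hrel W hW A0rel hA0
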